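/- Let e₊, e₋ ∈ V with η(e₊,e₊) = η(e₋,e₋) = 0 and η(e₊,e₋) = 1, and let x₁,x₂,x₃ ∈ V be pairwise η-orthogonal, each η-orthogonal to both e₊ and e₋, with η(xᵢ,xᵢ) ≠ 0 for each i. Set f := ι(x₁)ι(x₂)ι(x₃) ∈ Cl(V), φ̂ := ι(e₊)·f, π := span{x₁,x₂,x₃}, W := the η-orthogonal complement of span{e₊,e₋} ⊕ π, and β_v := ι(v)·φ̂ − 3·φ̂·ι(v). For v ∈ V write v = v₊ + v₋ + v⊤ + v⊥ with v₊ ∈ ℝe₊, v₋ ∈ ℝe₋, v⊤ ∈ π, v⊥ ∈ W, and set θ(v) := η(v, e₊). Then for all v,w ∈ V, in Cl(V): [β_v, β_w] = 8·θ(v)·(4ι(w⊤) + ι(w⊥))·ι(e₊)·f² − 8·θ(w)·(4ι(v⊤) + ι(v⊥))·ι(e₊)·f². -/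

import Mathlib

/-! Write `E = ι e₊`, `M = ι e₋` and `F = f`. Since `e₊` is null, `E * E = 0`, and
`η(e₊, e₋) = 1` gives `M * E + E * M = -2`. Being a product of three mutually orthogonal
vectors, `F` commutes with `ι(π)` and anticommutes with every vector orthogonal to `π`.
These relations give the closed form `β_v = 2 (θ(v) (E M - 1) + E (ι v⊥ - 2 ι v⊤)) F`.
In the product `β_v β_w` every word containing `E` twice vanishes, and what is symmetric in
`v, w` cancels in the commutator. -/

noncomputable section

variable (V : Type) [AddCommGroup V] [Module ℝ V]

/-- The quadratic form `v ↦ -η(v,v)`; its Clifford algebra satisfies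
`ι v * ι v = -η(v,v) • 1`. -/
def Qf (η : LinearMap.BilinForm ℝ V) : QuadraticForm ℝ V := (-η).toQuadraticMap

/-- `A` belongs to `so(V)`: it is skew-adjoint with respect to `η`. -/
def IsSkew (η : LinearMap.BilinForm ℝ V) (A : Module.End ℝ V) : Prop :=
  ∀ v w : V, η (A v) w + η v (A w) = 0

/-- `e` is an `η`-orthonormal basis exhibiting the 'mostly minus' Lorentzian
signature `(1,10)` in dimension 11. -/
def IsLorentzianBasis (η : LinearMap.BilinForm ℝ V) (e : Module.Basis (Fin 11) ℝ V) : Prop :=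
  ∀ i j, η (e i) (e j) = if i = j then (if (i : ℕ) = 0 then 1 else -1) else 0

/-- The commutator `[x,y] = x·y − y·x` in the Clifford algebra. -/
def brk (η : LinearMap.BilinForm ℝ V) (x y : CliffordAlgebra (Qf V η)) :
    CliffordAlgebra (Qf V η) := x * y - y * x

/-- `β_v = ι(v)·c − 3·c·ι(v)` for an element `c` of the Clifford algebra. -/
def betaC (η : LinearMap.BilinForm ℝ V) (c : CliffordAlgebra (Qf V η)) (v : V) :
    CliffordAlgebra (Qf V η) :=
  CliffordAlgebra.ι (Qf V η) v * c - (3 : ℝ) • (c * CliffordAlgebra.ι (Qf V η) v)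

open CliffordAlgebra

section Anticommuting

variable {A : Type*} [Ring A]

theorem mul_left_comm_of_anticomm {a b : A} (h : a * b = -(b * a)) (c : A) :
    a * (b * c) = -(b * (a * c)) := by
  rw [← mul_assoc, h, neg_mul, mul_assoc]

theorem mul_mul_mul_anticomm {x y z a : A} (hx : x * a = -(a * x)) (hy : y * a = -(a * y))
    (hz : z * a = -(a * z)) : x * y * z * a = -(a * (x * y * z)) := by
  simp only [mul_assoc, hz, mul_neg, mul_left_comm_of_anticomm hy, mul_left_comm_of_anticomm hx,
    neg_neg]

theorem commute_mul_mul_of_anticomm {x y z : A} (hxy : x * y = -(y * x))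
    (hxz : x * z = -(z * x)) (hyz : y * z = -(z * y)) :
    Commute (x * y * z) x ∧ Commute (x * y * z) y ∧ Commute (x * y * z) z := by
  have hyx : y * x = -(x * y) := by rw [hxy, neg_neg]
  have hzx : z * x = -(x * z) := by rw [hxz, neg_neg]
  have hzy : z * y = -(y * z) := by rw [hyz, neg_neg]
  refine ⟨?_, ?_, ?_⟩ <;> simp only [Commute, SemiconjBy, mul_assoc]
  · rw [hzx, mul_neg, mul_left_comm_of_anticomm hyx, neg_neg]
  · rw [hzy, mul_neg, mul_neg, mul_left_comm_of_anticomm hyx]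
  · rw [mul_left_comm_of_anticomm hzx, mul_left_comm_of_anticomm hzy, mul_neg, neg_neg]

theorem mul_left_comm_of_mul_add_swap_eq_neg_two {a b : A} (h : a * b + b * a = -2) (c : A) :
    a * (b * c) = -(b * (a * c)) - (c + c) := by
  rw [← mul_assoc, eq_sub_of_add_eq h, sub_mul, neg_mul, two_mul, mul_assoc]
  abel

variable [Algebra ℝ A] {E M F : A}

-- Words are normalised by moving `F` to the right and `E` to the left, where `E * E = 0` and
-- `M * E = -2 - E * M` reduce them.
theorem beta_eq (hEE : E * E = 0) (hME : M * E + E * M = -2) (hFE : F * E = -(E * F))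
    (hFM : F * M = -(M * F)) {T P : A} (hTE : T * E = -(E * T)) (hFT : Commute F T)
    (hPE : P * E = -(E * P)) (hFP : F * P = -(P * F)) (a b : ℝ) :
    (a • E + b • M + T + P) * (E * F) - (3 : ℝ) • (E * F * (a • E + b • M + T + P)) =
      (2 : ℝ) • ((b • (E * M - 1) + E * (P - (2 : ℝ) • T)) * F) := by
  have hEE' (x : A) : E * (E * x) = 0 := by rw [← mul_assoc, hEE, zero_mul]
  simp only [mul_add, add_mul, mul_sub, sub_mul, smul_mul_assoc, mul_smul_comm, mul_assoc,
    mul_left_comm_of_mul_add_swap_eq_neg_two hME, hEE', mul_left_comm_of_anticomm hTE,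
    mul_left_comm_of_anticomm hPE, hFE, hFM, hFT.eq, hFP, mul_neg, one_mul]
  module

theorem commutator_beta_eq (hEE : E * E = 0) (hME : M * E + E * M = -2)
    (hFE : F * E = -(E * F)) (hFM : F * M = -(M * F)) {T P T' P' : A}
    (hTE : T * E = -(E * T)) (hFT : Commute F T) (hPE : P * E = -(E * P))
    (hFP : F * P = -(P * F)) (hTE' : T' * E = -(E * T')) (hFT' : Commute F T')
    (hPE' : P' * E = -(E * P')) (hFP' : F * P' = -(P' * F)) (b b' : ℝ) :
    (2 : ℝ) • ((b • (E * M - 1) + E * (P - (2 : ℝ) • T)) * F) *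
        (2 : ℝ) • ((b' • (E * M - 1) + E * (P' - (2 : ℝ) • T')) * F) -
      (2 : ℝ) • ((b' • (E * M - 1) + E * (P' - (2 : ℝ) • T')) * F) *
        (2 : ℝ) • ((b • (E * M - 1) + E * (P - (2 : ℝ) • T)) * F) =
      (8 * b) • (((4 : ℝ) • T' + P') * (E * (F * F))) -
        (8 * b') • (((4 : ℝ) • T + P) * (E * (F * F))) := by
  have hEE' (x : A) : E * (E * x) = 0 := by rw [← mul_assoc, hEE, zero_mul]
  simp only [mul_add, add_mul, mul_sub, sub_mul, smul_mul_assoc, mul_smul_comm, mul_assoc,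
    smul_add, smul_sub, mul_left_comm_of_mul_add_swap_eq_neg_two hME, hEE',
    mul_left_comm_of_anticomm hTE, mul_left_comm_of_anticomm hPE, mul_left_comm_of_anticomm hTE',
    mul_left_comm_of_anticomm hPE', mul_left_comm_of_anticomm hFE, mul_left_comm_of_anticomm hFM,
    hFT.left_comm, hFT'.left_comm, mul_left_comm_of_anticomm hFP, mul_left_comm_of_anticomm hFP',
    mul_neg, neg_neg, one_mul, smul_neg, smul_zero, neg_zero]
  module

end Anticommuting

theorem LinearMap.BilinForm.apply_eq_zero_of_mem_span {R M : Type*} [CommRing R]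
    [AddCommGroup M] [Module R M] {B : LinearMap.BilinForm R M} {s : Set M} {u t : M}
    (h : ∀ x ∈ s, B x u = 0) (ht : t ∈ Submodule.span R s) : B t u = 0 :=
  (Submodule.span_le (p := LinearMap.ker (B.flip u))).2 h ht

section Clifford

variable {V}

theorem IsLorentzianBasis.isSymm {η : LinearMap.BilinForm ℝ V} {e : Module.Basis (Fin 11) ℝ V}
    (he : IsLorentzianBasis V η e) : η.IsSymm :=
  (LinearMap.BilinForm.isSymm_iff_basis e).2 fun i j => by
    rw [he, he]
    by_cases h : i = j <;> simp [h, eq_comm]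

variable {η : LinearMap.BilinForm ℝ V}

theorem Qf_apply (x : V) : Qf V η x = -η x x := by
  simp [Qf, LinearMap.BilinMap.toQuadraticMap_apply]

theorem isOrtho_Qf_iff (hη : η.IsSymm) {u w : V} : (Qf V η).IsOrtho u w ↔ η u w = 0 := by
  rw [Qf, LinearMap.BilinForm.toQuadraticMap_isOrtho
    (LinearMap.BilinForm.isSymm_iff.1 hη.neg)]
  simp

theorem ι_mul_ι_eq_neg_of_apply_eq_zero (hη : η.IsSymm) {u w : V} (h : η u w = 0) :
    ι (Qf V η) u * ι (Qf V η) w = -(ι (Qf V η) w * ι (Qf V η) u) :=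
  ι_mul_ι_comm_of_isOrtho ((isOrtho_Qf_iff hη).2 h)

theorem ι_mul_self_of_apply_self_eq_zero {u : V} (h : η u u = 0) :
    ι (Qf V η) u * ι (Qf V η) u = 0 := by
  rw [ι_sq_scalar, Qf_apply, h, neg_zero, map_zero]

theorem ι_mul_ι_add_swap_of_apply_eq_one (hη : η.IsSymm) {u w : V} (h : η u w = 1) :
    ι (Qf V η) w * ι (Qf V η) u + ι (Qf V η) u * ι (Qf V η) w = -2 := by
  rw [ι_mul_ι_add_swap, Qf, LinearMap.BilinMap.polar_toQuadraticMap]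
  simp only [LinearMap.neg_apply, hη.eq w u, h]
  rw [← neg_add, one_add_one_eq_two, map_neg, map_ofNat]

theorem ι_mul_ι_eq_neg_of_mem_orthogonal (hη : η.IsSymm) {s : Set V} {p u : V}
    (hp : p ∈ η.orthogonal (Submodule.span ℝ s)) (hu : u ∈ s) :
    ι (Qf V η) p * ι (Qf V η) u = -(ι (Qf V η) u * ι (Qf V η) p) :=
  ι_mul_ι_eq_neg_of_apply_eq_zero hη ((hη.eq p u).trans (hp u (Submodule.subset_span hu)))

variable {x₁ x₂ x₃ : V}

theorem mul_ι_of_forall_apply_eq_zero (hη : η.IsSymm) {u : V}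
    (h : ∀ x ∈ ({x₁, x₂, x₃} : Set V), η x u = 0) :
    ι (Qf V η) x₁ * ι (Qf V η) x₂ * ι (Qf V η) x₃ * ι (Qf V η) u =
      -(ι (Qf V η) u * (ι (Qf V η) x₁ * ι (Qf V η) x₂ * ι (Qf V η) x₃)) := by
  simp only [Set.mem_insert_iff, Set.mem_singleton_iff, forall_eq_or_imp, forall_eq] at h
  exact mul_mul_mul_anticomm (ι_mul_ι_eq_neg_of_apply_eq_zero hη h.1)
    (ι_mul_ι_eq_neg_of_apply_eq_zero hη h.2.1) (ι_mul_ι_eq_neg_of_apply_eq_zero hη h.2.2)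

theorem commute_ι_of_mem_span (hη : η.IsSymm) (h₁₂ : η x₁ x₂ = 0) (h₁₃ : η x₁ x₃ = 0)
    (h₂₃ : η x₂ x₃ = 0) {t : V} (ht : t ∈ Submodule.span ℝ {x₁, x₂, x₃}) :
    Commute (ι (Qf V η) x₁ * ι (Qf V η) x₂ * ι (Qf V η) x₃) (ι (Qf V η) t) := by
  obtain ⟨h₁, h₂, h₃⟩ := commute_mul_mul_of_anticomm (ι_mul_ι_eq_neg_of_apply_eq_zero hη h₁₂)
    (ι_mul_ι_eq_neg_of_apply_eq_zero hη h₁₃) (ι_mul_ι_eq_neg_of_apply_eq_zero hη h₂₃)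
  have hspan : Submodule.span ℝ {x₁, x₂, x₃} ≤ (Subalgebra.centralizer ℝ
      {ι (Qf V η) x₁ * ι (Qf V η) x₂ * ι (Qf V η) x₃}).toSubmodule.comap (ι (Qf V η)) := by
    simp only [Submodule.span_le, Set.insert_subset_iff, Set.singleton_subset_iff,
      SetLike.mem_coe, Submodule.mem_comap, Subalgebra.mem_toSubmodule,
      Subalgebra.mem_centralizer_iff,
      Set.mem_singleton_iff, forall_eq]
    exact ⟨h₁.eq, h₂.eq, h₃.eq⟩
  exact (Subalgebra.mem_centralizer_iff ℝ).1 (hspan ht) _ rfl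

end Clifford

theorem stmt_6
    (η : LinearMap.BilinForm ℝ V) (e : Module.Basis (Fin 11) ℝ V) (he : IsLorentzianBasis V η e)
    (ep em : V)
    (hep : η ep ep = 0) (hepem : η ep em = 1)
    (x₁ x₂ x₃ : V)
    (horth : ∀ i j : Fin 3, i ≠ j → η (![x₁, x₂, x₃] i) (![x₁, x₂, x₃] j) = 0)
    (horthp : ∀ i : Fin 3, η (![x₁, x₂, x₃] i) ep = 0)
    (horthm : ∀ i : Fin 3, η (![x₁, x₂, x₃] i) em = 0)
    (f : CliffordAlgebra (Qf V η))
    (hf : f = CliffordAlgebra.ι (Qf V η) x₁ * CliffordAlgebra.ι (Qf V η) x₂ *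
      CliffordAlgebra.ι (Qf V η) x₃)
    (φc : CliffordAlgebra (Qf V η)) (hφc : φc = CliffordAlgebra.ι (Qf V η) ep * f)
    (v w vp vm vT vP wp wm wT wP : V)
    (hvp : vp ∈ Submodule.span ℝ {ep}) (hvm : vm ∈ Submodule.span ℝ {em})
    (hwp : wp ∈ Submodule.span ℝ {ep}) (hwm : wm ∈ Submodule.span ℝ {em})
    (hvT : vT ∈ Submodule.span ℝ {x₁, x₂, x₃})
    (hwT : wT ∈ Submodule.span ℝ {x₁, x₂, x₃})
    (hvP : vP ∈ η.orthogonal (Submodule.span ℝ {ep, em, x₁, x₂, x₃}))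
    (hwP : wP ∈ η.orthogonal (Submodule.span ℝ {ep, em, x₁, x₂, x₃}))
    (hv : v = vp + vm + vT + vP) (hw : w = wp + wm + wT + wP) :
    brk V η (betaC V η φc v) (betaC V η φc w)
      = (8 * η v ep) • (((4 : ℝ) • CliffordAlgebra.ι (Qf V η) wT
            + CliffordAlgebra.ι (Qf V η) wP) * (CliffordAlgebra.ι (Qf V η) ep * (f * f)))
        - (8 * η w ep) • (((4 : ℝ) • CliffordAlgebra.ι (Qf V η) vT
            + CliffordAlgebra.ι (Qf V η) vP) * (CliffordAlgebra.ι (Qf V η) ep * (f * f))) := by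
  have hη := he.isSymm
  have hxep : ∀ x ∈ ({x₁, x₂, x₃} : Set V), η x ep = 0 := by
    simpa [Fin.forall_fin_succ] using horthp
  have hxem : ∀ x ∈ ({x₁, x₂, x₃} : Set V), η x em = 0 := by
    simpa [Fin.forall_fin_succ] using horthm
  have hF {u : V} (h : ∀ x ∈ ({x₁, x₂, x₃} : Set V), η x u = 0) :=
    hf ▸ mul_ι_of_forall_apply_eq_zero hη h
  have hFT {t : V} (ht : t ∈ Submodule.span ℝ {x₁, x₂, x₃}) : Commute f (ι (Qf V η) t) :=
    hf ▸ commute_ι_of_mem_span hη (by simpa using horth 0 1 (by decide))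
      (by simpa using horth 0 2 (by decide)) (by simpa using horth 1 2 (by decide)) ht
  have hTE {t : V} (ht : t ∈ Submodule.span ℝ {x₁, x₂, x₃}) :=
    ι_mul_ι_eq_neg_of_apply_eq_zero hη (LinearMap.BilinForm.apply_eq_zero_of_mem_span hxep ht)
  have hPE {p : V} (hp : p ∈ η.orthogonal (Submodule.span ℝ {ep, em, x₁, x₂, x₃})) :=
    ι_mul_ι_eq_neg_of_mem_orthogonal hη hp (by simp : ep ∈ _)
  have hFP {p : V} (hp : p ∈ η.orthogonal (Submodule.span ℝ {ep, em, x₁, x₂, x₃})) :=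
    hF fun x hx => hp x (Submodule.subset_span (.inr (.inr hx)))
  have hθ {a b : ℝ} {t p : V} (ht : t ∈ Submodule.span ℝ {x₁, x₂, x₃})
      (hp : p ∈ η.orthogonal (Submodule.span ℝ {ep, em, x₁, x₂, x₃})) :
      η (a • ep + b • em + t + p) ep = b := by
    simp [hep, hη.eq em ep, hepem, LinearMap.BilinForm.apply_eq_zero_of_mem_span hxep ht,
      hη.eq p ep, hp ep (Submodule.subset_span (by simp))]
  have hE := ι_mul_self_of_apply_self_eq_zero hep
  have hME := ι_mul_ι_add_swap_of_apply_eq_one hη hepem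
  obtain ⟨av, rfl⟩ := Submodule.mem_span_singleton.mp hvp
  obtain ⟨bv, rfl⟩ := Submodule.mem_span_singleton.mp hvm
  obtain ⟨aw, rfl⟩ := Submodule.mem_span_singleton.mp hwp
  obtain ⟨bw, rfl⟩ := Submodule.mem_span_singleton.mp hwm
  subst hv hw hφc
  rw [hθ hvT hvP, hθ hwT hwP]
  simp only [brk, betaC, map_add, map_smul]
  rw [beta_eq hE hME (hF hxep) (hF hxem) (hTE hvT) (hFT hvT) (hPE hvP) (hFP hvP),
    beta_eq hE hME (hF hxep) (hF hxem) (hTE hwT) (hFT hwT) (hPE hwP) (hFP hwP)]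
  exact commutator_beta_eq hE hME (hF hxep) (hF hxem) (hTE hvT) (hFT hvT) (hPE hvP) (hFP hvP)
    (hTE hwT) (hFT hwT) (hPE hwP) (hFP hwP) bv bw
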